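/- Let V be a vertex ring and e ∈ V. The following are equivalent: (a) e(n)e = 0 for all n ≥ 0 and e(-1)e = e; (b) e is an idempotent of V, i.e., e(n)e = δ_{n,-1} e for all n ∈ ℤ; (c) e lies in the center C(V) and e(-1)e = e. -/

import Mathlib

noncomputable section

/-- Binomial coefficient `C(m, n)` for integer `m` and natural `n`:
`C(m,n) = m(m-1)⋯(m-n+1)/n!`. -/
def ibin (m : ℤ) (n : ℕ) : ℤ :=
  if 0 ≤ m then ((m.toNat.choose n : ℕ) : ℤ)
  else (-1) ^ n * ((((n : ℤ) - m - 1).toNat.choose n : ℕ) : ℤ)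

/-- Binomial coefficient `C(m, n)` for integers `m, n`, zero when `n < 0`. -/
def ibinZ (m n : ℤ) : ℤ := if 0 ≤ n then ibin m n.toNat else 0

/-- A vertex ring structure on an additive abelian group `V`: biadditive
products `mul n u v = u(n)v` for all `n : ℤ`, a vacuum element `one = 𝟙`,
satisfying truncation, the vacuum axioms, and the Jacobi identity. -/
structure VertexRing (V : Type*) [AddCommGroup V] where
  mul : ℤ → V → V → V
  one : V
  add_left : ∀ (n : ℤ) (u u' v : V), mul n (u + u') v = mul n u v + mul n u' v
  add_right : ∀ (n : ℤ) (u v v' : V), mul n u (v + v') = mul n u v + mul n u v'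
  trunc : ∀ u v : V, ∃ n₀ : ℤ, 0 ≤ n₀ ∧ ∀ n : ℤ, n₀ ≤ n → mul n u v = 0
  vac_create : ∀ u : V, mul (-1) u one = u
  vac_ann : ∀ (u : V) (n : ℤ), 0 ≤ n → mul n u one = 0
  jacobi : ∀ (r s t : ℤ) (u v w : V),
      (∑ᶠ i : ℕ, ibin r i • mul (r + s - (i : ℤ)) (mul (t + (i : ℤ)) u v) w) =
      (∑ᶠ i : ℕ, ((-1) ^ i * ibin t i) •
        (mul (r + t - (i : ℤ)) u (mul (s + (i : ℤ)) v w)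
          - (((-1 : ℤˣ) ^ t : ℤˣ) : ℤ) • mul (s + t - (i : ℤ)) v (mul (r + (i : ℤ)) u w)))

/-- The canonical Hasse–Schmidt derivation of a vertex ring: `D m u = u(-m-1)𝟙`. -/
def VertexRing.D {V : Type*} [AddCommGroup V] (R : VertexRing V) (m : ℕ) (u : V) : V :=
  R.mul (-(m : ℤ) - 1) u R.one

/-- The center of a vertex ring: states whose vertex operator is the constant
`u(-1)`, i.e. `u(n) = 0` for all `n ≠ -1`. -/
def VertexRing.center {V : Type*} [AddCommGroup V] (R : VertexRing V) : Set V :=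
  {u | ∀ n : ℤ, n ≠ -1 → ∀ v : V, R.mul n u v = 0}

/-!
(a) ⇒ (b): the Jacobi identity with `t = -1` writes `(e(-1)e)(n)e` as a sum of iterated modes
of `e`; for `n ≤ -2` it reads `e(n)e = 2 e(n)e` once the modes strictly between `n` and `-1` are
known to vanish.

(b) ⇒ (c): taking `t = -1 - r` with `r` beyond the truncation order of `e` on `w`, the Jacobi
identity gives `e(n)w = ∑ᵢ C(r+i, i) e(-1-i)e(n+i)w` for all large `r`, which forces
`e(-1)e(n)w = e(n)w` and `e(m)e(p)w = 0` for `m ≤ -2`. Fed back into the `t = -1` identity this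
kills `e(m)w` for `m ≤ -2` directly and for `m ≥ 0` by induction.
-/

lemma ibin_zero_right (m : ℤ) : ibin m 0 = 1 := by
  unfold ibin; split <;> simp

lemma ibin_natCast (k i : ℕ) : ibin k i = k.choose i := by
  simp [ibin]

lemma neg_one_pow_mul_ibin_neg_one_sub (k i : ℕ) :
    (-1) ^ i * ibin (-1 - k) i = (k + i).choose i := by
  rw [ibin, if_neg (by omega), show ((i : ℤ) - (-1 - k) - 1).toNat = k + i by omega,
    ← mul_assoc, ← mul_pow]
  simp

lemma finsum_add_eq_add_of_eq_zero {α M : Type*} [AddCommMonoid M] {f g : α → M} (a b : α)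
    (hf : ∀ i ≠ a, f i = 0) (hg : ∀ i ≠ b, g i = 0) : ∑ᶠ i, (f i + g i) = f a + g b := by
  rw [finsum_add_distrib ((Set.finite_singleton a).subset (Function.support_subset_iff'.2 hf))
      ((Set.finite_singleton b).subset (Function.support_subset_iff'.2 hg)),
    finsum_eq_single f a hf, finsum_eq_single g b hg]

/-- Finite differences in `j` lower the top index of the sum and raise `k` by one. -/
lemma eq_ite_of_sum_range_choose_smul_eq {V : Type*} [AddCommGroup V] {x : ℕ → V} {c : V}
    (M k : ℕ) (h : ∀ j, ∑ i ∈ Finset.range (M + 1), (k + j + i).choose i • x i = c) :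
    ∀ i ≤ M, x i = if i = 0 then c else 0 := by
  induction M generalizing k x c with
  | zero =>
    intro i hi
    obtain rfl : i = 0 := by omega
    simpa using h 0
  | succ M ih =>
    have hdiff : ∀ j, ∑ i ∈ Finset.range (M + 1), (k + 1 + j + i).choose i • x (i + 1) = 0 := by
      intro j
      have hj := (h (j + 1)).trans (h j).symm
      simp only [Finset.sum_range_succ' _ (M + 1)] at hj
      have hpascal : ∀ i, (k + (j + 1) + (i + 1)).choose (i + 1)
          = (k + 1 + j + i).choose i + (k + j + (i + 1)).choose (i + 1) := fun i => by
        rw [show k + (j + 1) + (i + 1) = k + 1 + j + i + 1 by omega, Nat.choose_succ_succ',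
          show k + 1 + j + i = k + j + (i + 1) by omega]
      simpa [hpascal, add_smul, Finset.sum_add_distrib] using hj
    have hsucc : ∀ i ≤ M, x (i + 1) = 0 := fun i hi => by
      simpa using ih (k + 1) hdiff i hi
    rintro (_ | i) hi
    · have h0 := h 0
      rw [Finset.sum_range_succ', Finset.sum_eq_zero fun i hi => by
        rw [hsucc i (by simp at hi; omega), smul_zero]] at h0
      simpa using h0
    · simpa using hsucc i (by omega)

namespace VertexRing

section

variable {V : Type*} [AddCommGroup V] (R : VertexRing V)

lemma mul_zero_left (n : ℤ) (v : V) : R.mul n 0 v = 0 := by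
  simpa using R.add_left n 0 0 v

lemma mul_zero_right (n : ℤ) (u : V) : R.mul n u 0 = 0 := by
  simpa using R.add_right n u 0 0

/-- The Jacobi identity with `t = -1`. -/
lemma mul_neg_one_mul_eq_finsum {u v : V} (huv : ∀ m : ℤ, 0 ≤ m → R.mul m u v = 0)
    (r s : ℤ) (w : V) :
    R.mul (r + s) (R.mul (-1) u v) w =
      ∑ᶠ i : ℕ, (R.mul (r - 1 - i) u (R.mul (s + i) v w) +
        R.mul (s - 1 - i) v (R.mul (r + i) u w)) := by
  have J := R.jacobi r s (-1) u v w
  rw [finsum_eq_single _ 0 fun i hi => by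
    rw [huv _ (by omega), R.mul_zero_left, smul_zero]] at J
  convert J using 1
  · simp [ibin_zero_right]
  · refine finsum_congr fun i => ?_
    have hcoeff : (-1) ^ i * ibin (-1) i = 1 := by
      simpa using neg_one_pow_mul_ibin_neg_one_sub 0 i
    have hsign : (((-1 : ℤˣ) ^ (-1 : ℤ) : ℤˣ) : ℤ) = -1 := by simp
    rw [hcoeff, one_smul, hsign, neg_one_smul, sub_neg_eq_add, ← sub_eq_add_neg r,
      ← sub_eq_add_neg s]

/-- The Jacobi identity with `t = -1 - r`. -/
lemma mul_neg_one_mul_eq_finsum_choose {u v w : V} (huv : ∀ m : ℤ, m ≠ -1 → R.mul m u v = 0)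
    (r : ℕ) (huw : ∀ m : ℤ, r ≤ m → R.mul m u w = 0) (s : ℤ) :
    R.mul s (R.mul (-1) u v) w =
      ∑ᶠ i : ℕ, (r + i).choose i • R.mul (-1 - i) u (R.mul (s + i) v w) := by
  have J := R.jacobi r s (-1 - r) u v w
  rw [finsum_eq_single _ r fun i hi => by
    rw [huv _ (by omega), R.mul_zero_left, smul_zero]] at J
  convert J using 1
  · simp [ibin_natCast]
  · refine finsum_congr fun i => ?_
    rw [huw _ (by omega), R.mul_zero_right, smul_zero, sub_zero,
      neg_one_pow_mul_ibin_neg_one_sub, natCast_zsmul]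
    congr 3
    ring

end

section

variable {V : Type*} [AddCommGroup V] {R : VertexRing V} {e : V}

def IsIdempotent (R : VertexRing V) (e : V) : Prop :=
  ∀ n : ℤ, R.mul n e e = if n = -1 then e else 0

namespace IsIdempotent

lemma mul_neg_one_self (he : R.IsIdempotent e) : R.mul (-1) e e = e := by
  simpa using he (-1)

lemma mul_self_eq_zero_of_ne (he : R.IsIdempotent e) {n : ℤ} (hn : n ≠ -1) : R.mul n e e = 0 := by
  simpa [hn] using he n

/-- `e(n)w = ∑ᵢ C(r+i, i) e(-1-i)e(n+i)w` for every large `r`, and such a sum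
is independent of `r` only if it reduces to its `i = 0` term. -/
lemma mul_neg_one_sub_mul (he : R.IsIdempotent e) (n : ℤ) (w : V) (i : ℕ) :
    R.mul (-1 - i) e (R.mul (n + i) e w) = if i = 0 then R.mul n e w else 0 := by
  obtain ⟨K, hK0, hK⟩ := R.trunc e w
  set M := (K - n).toNat
  have hxM : ∀ i : ℕ, M < i → R.mul (-1 - i) e (R.mul (n + i) e w) = 0 := fun i hi => by
    rw [hK _ (by omega), R.mul_zero_right]
  have hsum : ∀ j, ∑ i ∈ Finset.range (M + 1),
      (K.toNat + j + i).choose i • R.mul (-1 - i) e (R.mul (n + i) e w) = R.mul n e w :=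
    fun j => by
      rw [← finsum_eq_sum_of_support_subset _ (Function.support_subset_iff'.2 fun i hi => by
          rw [hxM i (by simp at hi; omega), smul_zero]),
        ← R.mul_neg_one_mul_eq_finsum_choose (fun m hm => he.mul_self_eq_zero_of_ne hm) (K.toNat + j)
          (fun m hm => hK m (by omega)), he.mul_neg_one_self]
  by_cases hiM : i ≤ M
  · exact eq_ite_of_sum_range_choose_smul_eq M K.toNat hsum i hiM
  · rw [if_neg (by omega)]
    exact hxM i (by omega)

lemma mul_neg_one_mul (he : R.IsIdempotent e) (n : ℤ) (w : V) :
    R.mul (-1) e (R.mul n e w) = R.mul n e w := by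
  simpa using he.mul_neg_one_sub_mul n w 0

lemma mul_mul_eq_zero (he : R.IsIdempotent e) {m : ℤ} (hm : m ≤ -2) (p : ℤ) (w : V) :
    R.mul m e (R.mul p e w) = 0 := by
  have h := he.mul_neg_one_sub_mul (p + (m + 1)) w (-1 - m).toNat
  rwa [if_neg (by omega), show -1 - ((-1 - m).toNat : ℤ) = m by omega,
    show p + (m + 1) + ((-1 - m).toNat : ℤ) = p by omega] at h

/-- The `t = -1` identity for `(e(-1)e)(m) = e(m)` with `r = m + 1`, `s = -1`: every term on the
right is a mode `≤ -2` of `e` applied to some `e(p)w`. -/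
lemma mul_eq_zero_of_le_neg_two (he : R.IsIdempotent e) {m : ℤ} (hm : m ≤ -2) (w : V) :
    R.mul m e w = 0 := by
  have h := R.mul_neg_one_mul_eq_finsum (fun k hk => he.mul_self_eq_zero_of_ne (by omega)) (m + 1) (-1) w
  rw [show m + 1 + -1 = m by ring, he.mul_neg_one_self] at h
  rw [h, finsum_eq_zero_of_forall_eq_zero fun i => by
    rw [he.mul_mul_eq_zero (by omega), he.mul_mul_eq_zero (by omega), add_zero]]

lemma mul_natCast_eq_zero (he : R.IsIdempotent e) (n : ℕ) (w : V) : R.mul n e w = 0 := by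
  induction n using Nat.strong_induction_on with
  | _ n ih =>
  have h := R.mul_neg_one_mul_eq_finsum (fun k hk => he.mul_self_eq_zero_of_ne (by omega)) 0 n w
  rw [zero_add, he.mul_neg_one_self, finsum_add_eq_add_of_eq_zero 0 n
    (fun i hi => he.mul_mul_eq_zero (by omega) _ w)
    (fun i hi => by
      rcases lt_or_gt_of_ne hi with hlt | hgt
      · rw [zero_add, ih i hlt, R.mul_zero_right]
      · exact he.mul_mul_eq_zero (by omega) _ w)] at h
  simp only [Nat.cast_zero, zero_sub, sub_zero, add_zero, zero_add] at h
  rw [he.mul_neg_one_mul, show (n : ℤ) - 1 - n = -1 by ring, he.mul_neg_one_mul] at h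
  exact left_eq_add.mp h

lemma mem_center (he : R.IsIdempotent e) : e ∈ R.center := by
  intro n hn w
  rcases lt_or_ge n (-1) with hlt | hge
  · exact he.mul_eq_zero_of_le_neg_two (by omega) w
  · lift n to ℕ using (by omega)
    exact he.mul_natCast_eq_zero n w

end IsIdempotent

/-- The `t = -1` identity for `(e(-1)e)(n) = e(n)` with `r = n + 1`, `s = -1`, evaluated on `e`,
gives `e(n)e = 2 e(n)e` once the modes between `n` and `-1` are known to vanish. -/
lemma mul_neg_two_sub_self_eq_zero (h0 : ∀ n : ℤ, 0 ≤ n → R.mul n e e = 0)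
    (h1 : R.mul (-1) e e = e) (k : ℕ) : R.mul (-2 - k) e e = 0 := by
  induction k using Nat.strong_induction_on with
  | _ k ih =>
  have h := R.mul_neg_one_mul_eq_finsum h0 (-1 - k) (-1) e
  rw [h1, finsum_add_eq_add_of_eq_zero 0 k
    (fun i hi => by rw [h0 _ (by omega), R.mul_zero_right])
    (fun i hi => by
      rcases lt_or_gt_of_ne hi with hlt | hgt
      · rw [show (-1 - k : ℤ) + i = -2 - (k - 1 - i : ℕ) by omega, ih _ (by omega),
          R.mul_zero_right]
      · rw [h0 _ (by omega), R.mul_zero_right])] at h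
  simp only [Nat.cast_zero, sub_zero, add_zero, show (-1 - k : ℤ) + k = -1 by ring, h1] at h
  rw [show (-1 - k : ℤ) + -1 = -2 - k by ring, show (-1 - k : ℤ) - 1 = -2 - k by ring] at h
  exact left_eq_add.mp h

lemma isIdempotent_iff_mul_nonneg_eq_zero :
    R.IsIdempotent e ↔ (∀ n : ℤ, 0 ≤ n → R.mul n e e = 0) ∧ R.mul (-1) e e = e := by
  refine ⟨fun he => ⟨fun n hn => he.mul_self_eq_zero_of_ne (by omega), he.mul_neg_one_self⟩, ?_⟩
  rintro ⟨h0, h1⟩ n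
  split_ifs with hn
  · rw [hn, h1]
  rcases lt_or_ge n (-1) with hlt | hge
  · rw [show n = -2 - (-2 - n).toNat by omega]
    exact mul_neg_two_sub_self_eq_zero h0 h1 _
  · exact h0 n (by omega)

lemma isIdempotent_iff_mem_center :
    R.IsIdempotent e ↔ e ∈ R.center ∧ R.mul (-1) e e = e := by
  refine ⟨fun he => ⟨he.mem_center, he.mul_neg_one_self⟩, ?_⟩
  rintro ⟨hc, h1⟩ n
  split_ifs with hn
  · rw [hn, h1]
  · exact hc n hn e

end

end VertexRing

/-- For `e ∈ V` the following are equivalent: (a) `e(n)e = 0` for `n ≥ 0` and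
`e(-1)e = e`; (b) `e(n)e = δ_{n,-1} e` for all `n`; (c) `e` is in the center
and `e(-1)e = e`. -/
theorem idempotent_characterizations {V : Type*} [AddCommGroup V] (R : VertexRing V) (e : V) :
    (((∀ n : ℤ, 0 ≤ n → R.mul n e e = 0) ∧ R.mul (-1) e e = e) ↔
      (∀ n : ℤ, R.mul n e e = if n = -1 then e else 0)) ∧
    ((∀ n : ℤ, R.mul n e e = if n = -1 then e else 0) ↔
      (e ∈ R.center ∧ R.mul (-1) e e = e)) :=
  ⟨VertexRing.isIdempotent_iff_mul_nonneg_eq_zero.symm, VertexRing.isIdempotent_iff_mem_center⟩
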